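/- arXiv:1509.02297 — 2 statements merged into one kernel-verified Lean document; each statement's English description precedes it below -/
import Mathlib

section
/- Let A_1, A_2, B_1, B_2 be finite sets and let p be a probability mass function on A_1 × A_2 × B_1 × B_2 whose (A_1, A_2)-marginal is a product: p_{A_1 A_2}(a_1, a_2) = p_{A_1}(a_1)·p_{A_2}(a_2) for all a_1, a_2 (i.e., the first two coordinates X_1 and X_2 are independent). Then I(X_1, X_2 ; Y_1, Y_2) ≥ I(X_1 ; Y_1) + I(X_2 ; Y_2), where all mutual informations are computed from the corresponding marginals of p. -/
set_option linter.unusedSectionVars false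
set_option maxHeartbeats 1000000
open Finset

lemma gibbs' {ι : Type*} [Fintype ι] (p q : ι → ℝ) (hp : ∀ i, 0 ≤ p i) (hq : ∀ i, 0 ≤ q i)
    (hsum : ∑ i, q i ≤ ∑ i, p i) (hsupp : ∀ i, 0 < p i → 0 < q i) :
    0 ≤ ∑ i, p i * Real.log (p i / q i) := by
  have key : ∀ i, p i - q i ≤ p i * Real.log (p i / q i) := by
    intro i
    rcases (hp i).eq_or_lt with h | h
    · rw [← h]; simpa using hq i
    · have hqi := hsupp i h
      have hx : 0 < q i / p i := div_pos hqi h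
      have h1 : Real.log (q i / p i) ≤ q i / p i - 1 := Real.log_le_sub_one_of_pos hx
      have h2 : Real.log (q i / p i) = - Real.log (p i / q i) := by
        rw [← Real.log_inv, inv_div]
      rw [h2] at h1
      have h3 : p i * (q i / p i - 1) = q i - p i := by field_simp
      nlinarith [h1, h3, h.le]
  have h4 := Finset.sum_le_sum (fun i (_ : i ∈ univ) => key i)
  rw [Finset.sum_sub_distrib] at h4
  linarith

lemma sum4_comm {α β γ δ : Type*} [Fintype α] [Fintype β] [Fintype γ] [Fintype δ]
    (g : α → β → γ → δ → ℝ) :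
    ∑ a, ∑ b, ∑ c, ∑ d, g a b c d = ∑ c, ∑ d, ∑ a, ∑ b, g a b c d := by
  calc ∑ a, ∑ b, ∑ c, ∑ d, g a b c d
      = ∑ a, ∑ c, ∑ b, ∑ d, g a b c d := Finset.sum_congr rfl fun a _ => Finset.sum_comm
    _ = ∑ c, ∑ a, ∑ b, ∑ d, g a b c d := Finset.sum_comm
    _ = ∑ c, ∑ a, ∑ d, ∑ b, g a b c d :=
        Finset.sum_congr rfl fun c _ => Finset.sum_congr rfl fun a _ => Finset.sum_comm
    _ = ∑ c, ∑ d, ∑ a, ∑ b, g a b c d := Finset.sum_congr rfl fun c _ => Finset.sum_comm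

section Aux
variable {A1 A2 B1 B2 : Type*} [Fintype A1] [Fintype A2] [Fintype B1] [Fintype B2]

noncomputable def mX1 (f : A1 → A2 → B1 → B2 → ℝ) (a1 : A1) : ℝ := ∑ a2, ∑ b1, ∑ b2, f a1 a2 b1 b2
noncomputable def mX2 (f : A1 → A2 → B1 → B2 → ℝ) (a2 : A2) : ℝ := ∑ a1, ∑ b1, ∑ b2, f a1 a2 b1 b2
noncomputable def mY1 (f : A1 → A2 → B1 → B2 → ℝ) (b1 : B1) : ℝ := ∑ a1, ∑ a2, ∑ b2, f a1 a2 b1 b2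
noncomputable def mY2 (f : A1 → A2 → B1 → B2 → ℝ) (b2 : B2) : ℝ := ∑ a1, ∑ a2, ∑ b1, f a1 a2 b1 b2
noncomputable def mX1Y1 (f : A1 → A2 → B1 → B2 → ℝ) (a1 : A1) (b1 : B1) : ℝ := ∑ a2, ∑ b2, f a1 a2 b1 b2
noncomputable def mX2Y2 (f : A1 → A2 → B1 → B2 → ℝ) (a2 : A2) (b2 : B2) : ℝ := ∑ a1, ∑ b1, f a1 a2 b1 b2
noncomputable def mY (f : A1 → A2 → B1 → B2 → ℝ) (b1 : B1) (b2 : B2) : ℝ := ∑ a1, ∑ a2, f a1 a2 b1 b2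
noncomputable def mX (f : A1 → A2 → B1 → B2 → ℝ) (a1 : A1) (a2 : A2) : ℝ := ∑ b1, ∑ b2, f a1 a2 b1 b2

variable (f : A1 → A2 → B1 → B2 → ℝ) (h0 : ∀ a1 a2 b1 b2, 0 ≤ f a1 a2 b1 b2)

include h0

lemma le_mX1Y1 (a1 : A1) (a2 : A2) (b1 : B1) (b2 : B2) : f a1 a2 b1 b2 ≤ mX1Y1 f a1 b1 :=
  calc f a1 a2 b1 b2 ≤ ∑ b2, f a1 a2 b1 b2 :=
        Finset.single_le_sum (fun i _ => h0 a1 a2 b1 i) (mem_univ b2)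
    _ ≤ mX1Y1 f a1 b1 :=
        Finset.single_le_sum (fun i (_ : i ∈ univ) => Finset.sum_nonneg fun j _ => h0 a1 i b1 j)
          (mem_univ a2)

lemma le_mX2Y2 (a1 : A1) (a2 : A2) (b1 : B1) (b2 : B2) : f a1 a2 b1 b2 ≤ mX2Y2 f a2 b2 :=
  calc f a1 a2 b1 b2 ≤ ∑ b1, f a1 a2 b1 b2 :=
        Finset.single_le_sum (fun i _ => h0 a1 a2 i b2) (mem_univ b1)
    _ ≤ mX2Y2 f a2 b2 :=
        Finset.single_le_sum (fun i (_ : i ∈ univ) => Finset.sum_nonneg fun j _ => h0 i a2 j b2)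
          (mem_univ a1)

lemma le_mY' (a1 : A1) (a2 : A2) (b1 : B1) (b2 : B2) : f a1 a2 b1 b2 ≤ mY f b1 b2 :=
  calc f a1 a2 b1 b2 ≤ ∑ a2, f a1 a2 b1 b2 :=
        Finset.single_le_sum (fun i _ => h0 a1 i b1 b2) (mem_univ a2)
    _ ≤ mY f b1 b2 :=
        Finset.single_le_sum (fun i (_ : i ∈ univ) => Finset.sum_nonneg fun j _ => h0 i j b1 b2)
          (mem_univ a1)

lemma le_mY1' (a1 : A1) (a2 : A2) (b1 : B1) (b2 : B2) : f a1 a2 b1 b2 ≤ mY1 f b1 :=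
  calc f a1 a2 b1 b2 ≤ mX1Y1 f a1 b1 := le_mX1Y1 f h0 a1 a2 b1 b2
    _ ≤ mY1 f b1 :=
        Finset.single_le_sum
          (fun i (_ : i ∈ univ) =>
            Finset.sum_nonneg fun j _ => Finset.sum_nonneg fun k _ => h0 i j b1 k)
          (mem_univ a1)

lemma le_mY2' (a1 : A1) (a2 : A2) (b1 : B1) (b2 : B2) : f a1 a2 b1 b2 ≤ mY2 f b2 := by
  have h1 : f a1 a2 b1 b2 ≤ ∑ b1, f a1 a2 b1 b2 :=
    Finset.single_le_sum (fun i _ => h0 a1 a2 i b2) (mem_univ b1)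
  have h2 : (∑ b1, f a1 a2 b1 b2) ≤ ∑ a2, ∑ b1, f a1 a2 b1 b2 :=
    Finset.single_le_sum (fun i (_ : i ∈ univ) => Finset.sum_nonneg fun j _ => h0 a1 i j b2)
      (mem_univ a2)
  have h3 : (∑ a2, ∑ b1, f a1 a2 b1 b2) ≤ mY2 f b2 :=
    Finset.single_le_sum
      (fun i (_ : i ∈ univ) =>
        Finset.sum_nonneg fun j _ => Finset.sum_nonneg fun k _ => h0 i j k b2)
      (mem_univ a1)
  linarith

lemma le_mX1' (a1 : A1) (a2 : A2) (b1 : B1) (b2 : B2) : f a1 a2 b1 b2 ≤ mX1 f a1 := by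
  have h1 : f a1 a2 b1 b2 ≤ ∑ b2, f a1 a2 b1 b2 :=
    Finset.single_le_sum (fun i _ => h0 a1 a2 b1 i) (mem_univ b2)
  have h2 : (∑ b2, f a1 a2 b1 b2) ≤ ∑ b1, ∑ b2, f a1 a2 b1 b2 :=
    Finset.single_le_sum (fun i (_ : i ∈ univ) => Finset.sum_nonneg fun j _ => h0 a1 a2 i j)
      (mem_univ b1)
  have h3 : (∑ b1, ∑ b2, f a1 a2 b1 b2) ≤ mX1 f a1 :=
    Finset.single_le_sum
      (fun i (_ : i ∈ univ) =>
        Finset.sum_nonneg fun j _ => Finset.sum_nonneg fun k _ => h0 a1 i j k)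
      (mem_univ a2)
  linarith

lemma le_mX2' (a1 : A1) (a2 : A2) (b1 : B1) (b2 : B2) : f a1 a2 b1 b2 ≤ mX2 f a2 := by
  have h1 : f a1 a2 b1 b2 ≤ ∑ b2, f a1 a2 b1 b2 :=
    Finset.single_le_sum (fun i _ => h0 a1 a2 b1 i) (mem_univ b2)
  have h2 : (∑ b2, f a1 a2 b1 b2) ≤ ∑ b1, ∑ b2, f a1 a2 b1 b2 :=
    Finset.single_le_sum (fun i (_ : i ∈ univ) => Finset.sum_nonneg fun j _ => h0 a1 a2 i j)
      (mem_univ b1)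
  have h3 : (∑ b1, ∑ b2, f a1 a2 b1 b2) ≤ mX2 f a2 :=
    Finset.single_le_sum
      (fun i (_ : i ∈ univ) =>
        Finset.sum_nonneg fun j _ => Finset.sum_nonneg fun k _ => h0 i a2 j k)
      (mem_univ a1)
  linarith

lemma core (h1 : ∑ a1, ∑ a2, ∑ b1, ∑ b2, f a1 a2 b1 b2 = 1)
    (hind : ∀ a1 a2, mX f a1 a2 = mX1 f a1 * mX2 f a2) :
    (∑ a1, ∑ b1, mX1Y1 f a1 b1 * Real.log (mX1Y1 f a1 b1 / (mX1 f a1 * mY1 f b1)))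
      + (∑ a2, ∑ b2, mX2Y2 f a2 b2 * Real.log (mX2Y2 f a2 b2 / (mX2 f a2 * mY2 f b2)))
    ≤ ∑ a1, ∑ a2, ∑ b1, ∑ b2,
        f a1 a2 b1 b2 * Real.log (f a1 a2 b1 b2 / (mX f a1 a2 * mY f b1 b2)) := by
  set Q : A1 → A2 → B1 → B2 → ℝ := fun a1 a2 b1 b2 =>
    mX1Y1 f a1 b1 * mX2Y2 f a2 b2 * mY f b1 b2 / (mY1 f b1 * mY2 f b2) with hQ
  -- nonnegativity of marginals
  have nX1Y1 : ∀ a1 b1, 0 ≤ mX1Y1 f a1 b1 := fun a1 b1 =>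
    Finset.sum_nonneg fun _ _ => Finset.sum_nonneg fun _ _ => h0 _ _ _ _
  have nX2Y2 : ∀ a2 b2, 0 ≤ mX2Y2 f a2 b2 := fun a2 b2 =>
    Finset.sum_nonneg fun _ _ => Finset.sum_nonneg fun _ _ => h0 _ _ _ _
  have nY : ∀ b1 b2, 0 ≤ mY f b1 b2 := fun b1 b2 =>
    Finset.sum_nonneg fun _ _ => Finset.sum_nonneg fun _ _ => h0 _ _ _ _
  have nY1 : ∀ b1, 0 ≤ mY1 f b1 := fun b1 =>
    Finset.sum_nonneg fun _ _ => Finset.sum_nonneg fun _ _ => Finset.sum_nonneg fun _ _ => h0 _ _ _ _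
  have nY2 : ∀ b2, 0 ≤ mY2 f b2 := fun b2 =>
    Finset.sum_nonneg fun _ _ => Finset.sum_nonneg fun _ _ => Finset.sum_nonneg fun _ _ => h0 _ _ _ _
  have nQ : ∀ a1 a2 b1 b2, 0 ≤ Q a1 a2 b1 b2 := fun a1 a2 b1 b2 =>
    div_nonneg (mul_nonneg (mul_nonneg (nX1Y1 _ _) (nX2Y2 _ _)) (nY _ _))
      (mul_nonneg (nY1 _) (nY2 _))
  -- expand I1 into a 4-fold sum
  have e1 : (∑ a1, ∑ b1, mX1Y1 f a1 b1 * Real.log (mX1Y1 f a1 b1 / (mX1 f a1 * mY1 f b1)))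
      = ∑ a1, ∑ a2, ∑ b1, ∑ b2,
          f a1 a2 b1 b2 * Real.log (mX1Y1 f a1 b1 / (mX1 f a1 * mY1 f b1)) := by
    refine Finset.sum_congr rfl fun a1 _ => ?_
    calc ∑ b1, mX1Y1 f a1 b1 * Real.log (mX1Y1 f a1 b1 / (mX1 f a1 * mY1 f b1))
        = ∑ b1, ∑ a2, ∑ b2,
            f a1 a2 b1 b2 * Real.log (mX1Y1 f a1 b1 / (mX1 f a1 * mY1 f b1)) := by
          simp only [mX1Y1, Finset.sum_mul]
      _ = ∑ a2, ∑ b1, ∑ b2,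
            f a1 a2 b1 b2 * Real.log (mX1Y1 f a1 b1 / (mX1 f a1 * mY1 f b1)) := Finset.sum_comm
  -- expand I2 into a 4-fold sum
  have e2 : (∑ a2, ∑ b2, mX2Y2 f a2 b2 * Real.log (mX2Y2 f a2 b2 / (mX2 f a2 * mY2 f b2)))
      = ∑ a1, ∑ a2, ∑ b1, ∑ b2,
          f a1 a2 b1 b2 * Real.log (mX2Y2 f a2 b2 / (mX2 f a2 * mY2 f b2)) := by
    calc ∑ a2, ∑ b2, mX2Y2 f a2 b2 * Real.log (mX2Y2 f a2 b2 / (mX2 f a2 * mY2 f b2))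
        = ∑ a2, ∑ b2, ∑ a1, ∑ b1,
            f a1 a2 b1 b2 * Real.log (mX2Y2 f a2 b2 / (mX2 f a2 * mY2 f b2)) := by
          simp only [mX2Y2, Finset.sum_mul]
      _ = ∑ a1, ∑ b1, ∑ a2, ∑ b2,
            f a1 a2 b1 b2 * Real.log (mX2Y2 f a2 b2 / (mX2 f a2 * mY2 f b2)) :=
          sum4_comm (fun a2 b2 a1 b1 =>
            f a1 a2 b1 b2 * Real.log (mX2Y2 f a2 b2 / (mX2 f a2 * mY2 f b2)))
      _ = ∑ a1, ∑ a2, ∑ b1, ∑ b2,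
            f a1 a2 b1 b2 * Real.log (mX2Y2 f a2 b2 / (mX2 f a2 * mY2 f b2)) :=
          Finset.sum_congr rfl fun a1 _ => Finset.sum_comm
  -- termwise identity
  have key : ∀ a1 a2 b1 b2,
      f a1 a2 b1 b2 * Real.log (f a1 a2 b1 b2 / (mX f a1 a2 * mY f b1 b2))
        - f a1 a2 b1 b2 * Real.log (mX1Y1 f a1 b1 / (mX1 f a1 * mY1 f b1))
        - f a1 a2 b1 b2 * Real.log (mX2Y2 f a2 b2 / (mX2 f a2 * mY2 f b2))
      = f a1 a2 b1 b2 * Real.log (f a1 a2 b1 b2 / Q a1 a2 b1 b2) := by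
    intro a1 a2 b1 b2
    rcases (h0 a1 a2 b1 b2).eq_or_lt with h | h
    · rw [← h]; ring
    · have pX1Y1 := lt_of_lt_of_le h (le_mX1Y1 f h0 a1 a2 b1 b2)
      have pX2Y2 := lt_of_lt_of_le h (le_mX2Y2 f h0 a1 a2 b1 b2)
      have pY := lt_of_lt_of_le h (le_mY' f h0 a1 a2 b1 b2)
      have pY1 := lt_of_lt_of_le h (le_mY1' f h0 a1 a2 b1 b2)
      have pY2 := lt_of_lt_of_le h (le_mY2' f h0 a1 a2 b1 b2)
      have pX1 := lt_of_lt_of_le h (le_mX1' f h0 a1 a2 b1 b2)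
      have pX2 := lt_of_lt_of_le h (le_mX2' f h0 a1 a2 b1 b2)
      have hq' : f a1 a2 b1 b2 / Q a1 a2 b1 b2
          = f a1 a2 b1 b2 * (mY1 f b1 * mY2 f b2)
            / (mX1Y1 f a1 b1 * mX2Y2 f a2 b2 * mY f b1 b2) := by
        rw [hQ]
        exact div_div_eq_mul_div _ _ _
      rw [hind a1 a2, hq']
      rw [Real.log_div h.ne' (mul_pos (mul_pos pX1 pX2) pY).ne',
        Real.log_div pX1Y1.ne' (mul_pos pX1 pY1).ne',
        Real.log_div pX2Y2.ne' (mul_pos pX2 pY2).ne',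
        Real.log_div (mul_pos h (mul_pos pY1 pY2)).ne'
          (mul_pos (mul_pos pX1Y1 pX2Y2) pY).ne',
        Real.log_mul (mul_pos pX1 pX2).ne' pY.ne', Real.log_mul pX1.ne' pX2.ne',
        Real.log_mul pX1.ne' pY1.ne', Real.log_mul pX2.ne' pY2.ne',
        Real.log_mul h.ne' (mul_pos pY1 pY2).ne', Real.log_mul pY1.ne' pY2.ne',
        Real.log_mul (mul_pos pX1Y1 pX2Y2).ne' pY.ne', Real.log_mul pX1Y1.ne' pX2Y2.ne']
      ring
  -- sum of Q is at most 1
  have sumQ : (∑ a1, ∑ a2, ∑ b1, ∑ b2, Q a1 a2 b1 b2) ≤ 1 := by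
    have step1 : (∑ a1, ∑ a2, ∑ b1, ∑ b2, Q a1 a2 b1 b2)
        = ∑ b1, ∑ b2, ∑ a1, ∑ a2, Q a1 a2 b1 b2 := sum4_comm _
    have step2 : ∀ b1 b2, (∑ a1, ∑ a2, Q a1 a2 b1 b2) ≤ mY f b1 b2 := by
      intro b1 b2
      have pull : (∑ a1, ∑ a2, Q a1 a2 b1 b2)
          = (∑ a1, mX1Y1 f a1 b1) * (∑ a2, mX2Y2 f a2 b2)
              * (mY f b1 b2 / (mY1 f b1 * mY2 f b2)) := by
        rw [Finset.sum_mul_sum, Finset.sum_mul]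
        simp only [Finset.sum_mul, hQ, mul_div_assoc]
      have m1 : (∑ a1, mX1Y1 f a1 b1) = mY1 f b1 := by
        simp only [mX1Y1, mY1]
      have m2 : (∑ a2, mX2Y2 f a2 b2) = mY2 f b2 := by
        simp only [mX2Y2, mY2]; exact Finset.sum_comm
      rw [pull, m1, m2]
      rcases eq_or_lt_of_le (nY1 b1) with hz | hpos1
      · rw [← hz]; simpa using nY b1 b2
      rcases eq_or_lt_of_le (nY2 b2) with hz | hpos2
      · rw [← hz]; simpa using nY b1 b2
      rw [show mY1 f b1 * mY2 f b2 * (mY f b1 b2 / (mY1 f b1 * mY2 f b2)) = mY f b1 b2 from by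
        field_simp]
    have step3 : (∑ b1, ∑ b2, mY f b1 b2) = 1 := by
      rw [show (∑ b1, ∑ b2, mY f b1 b2) = ∑ a1, ∑ a2, ∑ b1, ∑ b2, f a1 a2 b1 b2 from by
        rw [sum4_comm f]; simp only [mY]]
      exact h1
    calc (∑ a1, ∑ a2, ∑ b1, ∑ b2, Q a1 a2 b1 b2)
        = ∑ b1, ∑ b2, ∑ a1, ∑ a2, Q a1 a2 b1 b2 := step1
      _ ≤ ∑ b1, ∑ b2, mY f b1 b2 :=
          Finset.sum_le_sum fun b1 _ => Finset.sum_le_sum fun b2 _ => step2 b1 b2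
      _ = 1 := step3
  -- Gibbs over the product type
  have gibbs0 : 0 ≤ ∑ a1, ∑ a2, ∑ b1, ∑ b2,
      f a1 a2 b1 b2 * Real.log (f a1 a2 b1 b2 / Q a1 a2 b1 b2) := by
    have := gibbs' (ι := A1 × A2 × B1 × B2)
      (fun z => f z.1 z.2.1 z.2.2.1 z.2.2.2) (fun z => Q z.1 z.2.1 z.2.2.1 z.2.2.2)
      (fun z => h0 _ _ _ _) (fun z => nQ _ _ _ _)
      (by simp only [Fintype.sum_prod_type]; rw [h1]; exact sumQ)
      (fun z hz => div_pos (mul_pos (mul_pos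
          (lt_of_lt_of_le hz (le_mX1Y1 f h0 _ _ _ _))
          (lt_of_lt_of_le hz (le_mX2Y2 f h0 _ _ _ _)))
          (lt_of_lt_of_le hz (le_mY' f h0 _ _ _ _)))
        (mul_pos (lt_of_lt_of_le hz (le_mY1' f h0 _ _ _ _))
          (lt_of_lt_of_le hz (le_mY2' f h0 _ _ _ _))))
    simpa only [Fintype.sum_prod_type] using this
  -- assemble
  have ediff : (∑ a1, ∑ a2, ∑ b1, ∑ b2,
        f a1 a2 b1 b2 * Real.log (f a1 a2 b1 b2 / (mX f a1 a2 * mY f b1 b2)))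
      - (∑ a1, ∑ a2, ∑ b1, ∑ b2,
          f a1 a2 b1 b2 * Real.log (mX1Y1 f a1 b1 / (mX1 f a1 * mY1 f b1)))
      - (∑ a1, ∑ a2, ∑ b1, ∑ b2,
          f a1 a2 b1 b2 * Real.log (mX2Y2 f a2 b2 / (mX2 f a2 * mY2 f b2)))
      = ∑ a1, ∑ a2, ∑ b1, ∑ b2,
          (f a1 a2 b1 b2 * Real.log (f a1 a2 b1 b2 / (mX f a1 a2 * mY f b1 b2))
            - f a1 a2 b1 b2 * Real.log (mX1Y1 f a1 b1 / (mX1 f a1 * mY1 f b1))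
            - f a1 a2 b1 b2 * Real.log (mX2Y2 f a2 b2 / (mX2 f a2 * mY2 f b2))) := by
    simp only [Finset.sum_sub_distrib]
  have ediff2 : (∑ a1, ∑ a2, ∑ b1, ∑ b2,
        (f a1 a2 b1 b2 * Real.log (f a1 a2 b1 b2 / (mX f a1 a2 * mY f b1 b2))
          - f a1 a2 b1 b2 * Real.log (mX1Y1 f a1 b1 / (mX1 f a1 * mY1 f b1))
          - f a1 a2 b1 b2 * Real.log (mX2Y2 f a2 b2 / (mX2 f a2 * mY2 f b2))))
      = ∑ a1, ∑ a2, ∑ b1, ∑ b2,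
          f a1 a2 b1 b2 * Real.log (f a1 a2 b1 b2 / Q a1 a2 b1 b2) :=
    Finset.sum_congr rfl fun a1 _ => Finset.sum_congr rfl fun a2 _ =>
      Finset.sum_congr rfl fun b1 _ => Finset.sum_congr rfl fun b2 _ => key a1 a2 b1 b2
  rw [e1, e2]
  linarith [gibbs0, ediff, ediff2]

end Aux



/-- Mutual information `I(U;V)` of a joint pmf `p` on `U × V` (natural log).
Terms with `p u v = 0` contribute `0` automatically since `Real.log 0 = 0`
and `0 * _ = 0`. -/
noncomputable def miInfo {U V : Type*} [Fintype U] [Fintype V]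
    (p : U → V → ℝ) : ℝ :=
  ∑ u, ∑ v, p u v * Real.log (p u v / ((∑ v', p u v') * (∑ u', p u' v)))

/-- If `(X₁, X₂, Y₁, Y₂) ~ p` with `X₁` independent of `X₂`, then
`I(X₁, X₂ ; Y₁, Y₂) ≥ I(X₁ ; Y₁) + I(X₂ ; Y₂)`. -/
theorem stmt3 {A1 A2 B1 B2 : Type*} [Fintype A1] [Fintype A2] [Fintype B1] [Fintype B2]
    (p : A1 × A2 × B1 × B2 → ℝ) (hp0 : ∀ z, 0 ≤ p z) (hp1 : ∑ z, p z = 1)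
    (hind : ∀ a1 a2, (∑ b1, ∑ b2, p (a1, a2, b1, b2))
        = (∑ a2', ∑ b1, ∑ b2, p (a1, a2', b1, b2))
          * (∑ a1', ∑ b1, ∑ b2, p (a1', a2, b1, b2))) :
    miInfo (fun (x : A1 × A2) (y : B1 × B2) => p (x.1, x.2, y.1, y.2))
      ≥ miInfo (fun (a1 : A1) (b1 : B1) => ∑ a2, ∑ b2, p (a1, a2, b1, b2))
        + miInfo (fun (a2 : A2) (b2 : B2) => ∑ a1, ∑ b1, p (a1, a2, b1, b2)) := by
  set f : A1 → A2 → B1 → B2 → ℝ := fun a1 a2 b1 b2 => p (a1, a2, b1, b2) with hf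
  have h0 : ∀ a1 a2 b1 b2, 0 ≤ f a1 a2 b1 b2 := fun _ _ _ _ => hp0 _
  have h1 : ∑ a1, ∑ a2, ∑ b1, ∑ b2, f a1 a2 b1 b2 = 1 := by
    simpa only [Fintype.sum_prod_type] using hp1
  have hind' : ∀ a1 a2, mX f a1 a2 = mX1 f a1 * mX2 f a2 := by
    intro a1 a2
    simpa only [mX, mX1, mX2, hf] using hind a1 a2
  have hmiJ : miInfo (fun (x : A1 × A2) (y : B1 × B2) => p (x.1, x.2, y.1, y.2))
      = ∑ a1, ∑ a2, ∑ b1, ∑ b2,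
          f a1 a2 b1 b2 * Real.log (f a1 a2 b1 b2 / (mX f a1 a2 * mY f b1 b2)) := by
    simp only [miInfo, Fintype.sum_prod_type, mX, mY, hf]
  have hmi1 : miInfo (fun (a1 : A1) (b1 : B1) => ∑ a2, ∑ b2, p (a1, a2, b1, b2))
      = ∑ a1, ∑ b1, mX1Y1 f a1 b1 * Real.log (mX1Y1 f a1 b1 / (mX1 f a1 * mY1 f b1)) := by
    unfold miInfo
    refine Finset.sum_congr rfl fun a1 _ => Finset.sum_congr rfl fun b1 _ => ?_
    rw [show (∑ b1', ∑ a2, ∑ b2, p (a1, a2, b1', b2))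
          = ∑ a2, ∑ b1', ∑ b2, p (a1, a2, b1', b2) from Finset.sum_comm]
    simp only [mX1Y1, mX1, mY1, hf]
  have hmi2 : miInfo (fun (a2 : A2) (b2 : B2) => ∑ a1, ∑ b1, p (a1, a2, b1, b2))
      = ∑ a2, ∑ b2, mX2Y2 f a2 b2 * Real.log (mX2Y2 f a2 b2 / (mX2 f a2 * mY2 f b2)) := by
    unfold miInfo
    refine Finset.sum_congr rfl fun a2 _ => Finset.sum_congr rfl fun b2 _ => ?_
    rw [show (∑ b2', ∑ a1, ∑ b1, p (a1, a2, b1, b2'))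
          = ∑ a1, ∑ b1, ∑ b2', p (a1, a2, b1, b2') from by
        rw [Finset.sum_comm]
        exact Finset.sum_congr rfl fun a1 _ => Finset.sum_comm,
      show (∑ a2', ∑ a1, ∑ b1, p (a1, a2', b1, b2))
          = ∑ a1, ∑ a2', ∑ b1, p (a1, a2', b1, b2) from Finset.sum_comm]
    simp only [mX2Y2, mX2, mY2, hf]
  rw [hmiJ, hmi1, hmi2]
  exact core f h0 h1 hind'
end

section
/- Let h₂(x) = −x·log₂(x) − (1−x)·log₂(1−x) be the binary entropy function (with the convention 0·log₂ 0 = 0). For every integer k ≥ 1, the function p ↦ R(p; k) := h₂( 1/2 + (1/2)·(1 − 2p)^k ) is concave on the interval [0, 1/2]. -/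
open Real Set

/-- Composition of a concave antitone function with a convex function is concave. -/
lemma concave_comp_convex_aux {s t : Set ℝ} {g f : ℝ → ℝ}
    (hg : ConcaveOn ℝ t g) (hf : ConvexOn ℝ s f) (hst : Set.MapsTo f s t)
    (hg' : AntitoneOn g t) : ConcaveOn ℝ s (fun x => g (f x)) := by
  refine ⟨hf.1, fun x hx y hy a b ha hb hab => ?_⟩
  have h1 := hf.2 hx hy ha hb hab
  have hmem : a • f x + b • f y ∈ t := hg.1 (hst hx) (hst hy) ha hb hab
  have h2 := hg' (hst (hf.1 hx hy ha hb hab)) hmem h1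
  have h3 := hg.2 (hst hx) (hst hy) ha hb hab
  calc a • g (f x) + b • g (f y) ≤ g (a • f x + b • f y) := h3
    _ ≤ g (f (a • x + b • y)) := h2

lemma h2_eq (x : ℝ) :
    -(x * Real.logb 2 x) - (1 - x) * Real.logb 2 (1 - x)
      = (Real.log 2)⁻¹ * Real.binEntropy x := by
  simp [Real.binEntropy, Real.logb, Real.log_inv, div_eq_mul_inv]
  ring

/-- For every integer `k ≥ 1`, the function
`p ↦ R(p; k) = h₂(1/2 + (1/2)(1 - 2p)^k)` is concave on `[0, 1/2]`, where
`h₂(x) = -x log₂ x - (1-x) log₂ (1-x)` is the binary entropy function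
(the convention `0 · log₂ 0 = 0` holds automatically since `Real.logb 2 0 = 0`). -/
theorem stmt7 (k : ℕ) (hk : 1 ≤ k) :
    let h2 : ℝ → ℝ := fun x => -(x * Real.logb 2 x) - (1 - x) * Real.logb 2 (1 - x)
    ConcaveOn ℝ (Set.Icc (0 : ℝ) (1 / 2))
      (fun p : ℝ => h2 (1 / 2 + (1 / 2) * (1 - 2 * p) ^ k)) := by
  intro h2
  have hlog2 : (0:ℝ) ≤ (Real.log 2)⁻¹ := by positivity
  -- concavity of h2 on [1/2, 1]
  have hbin : ConcaveOn ℝ (Icc (1/2 : ℝ) 1) Real.binEntropy :=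
    Real.strictConcave_binEntropy.concaveOn.subset
      (Icc_subset_Icc (by norm_num) le_rfl) (convex_Icc _ _)
  have hg : ConcaveOn ℝ (Icc (1/2 : ℝ) 1) h2 := by
    have := hbin.smul hlog2
    refine this.congr fun x _ => ?_
    simp only [smul_eq_mul, h2]
    exact (h2_eq x).symm
  -- antitone of h2 on [1/2, 1]
  have hanti : AntitoneOn h2 (Icc (1/2 : ℝ) 1) := by
    intro a ha b hb hab
    have h := (Real.binEntropy_strictAntiOn.antitoneOn)
      (by simpa [one_div] using ha) (by simpa [one_div] using hb) hab
    simp only [h2, h2_eq]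
    exact mul_le_mul_of_nonneg_left h hlog2
  -- convexity of f
  have hf : ConvexOn ℝ (Icc (0:ℝ) (1/2)) (fun p : ℝ => 1/2 + (1/2) * (1 - 2*p)^k) := by
    refine ⟨convex_Icc _ _, fun x hx y hy a b ha hb hab => ?_⟩
    have hx' : (0:ℝ) ≤ 1 - 2*x := by have := hx.2; linarith
    have hy' : (0:ℝ) ≤ 1 - 2*y := by have := hy.2; linarith
    have hpow := (convexOn_pow (𝕜 := ℝ) k).2 (mem_Ici.mpr hx') (mem_Ici.mpr hy') ha hb hab
    simp only [smul_eq_mul] at hpow ⊢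
    have hbase : 1 - 2*(a*x + b*y) = a*(1 - 2*x) + b*(1 - 2*y) := by nlinarith
    rw [hbase]
    nlinarith [hpow]
  -- maps to
  have hmaps : Set.MapsTo (fun p : ℝ => 1/2 + (1/2) * (1 - 2*p)^k)
      (Icc (0:ℝ) (1/2)) (Icc (1/2 : ℝ) 1) := by
    intro p hp
    have h0 : (0:ℝ) ≤ 1 - 2*p := by have := hp.2; linarith
    have h1 : (1:ℝ) - 2*p ≤ 1 := by have := hp.1; linarith
    have hp0 : (0:ℝ) ≤ (1 - 2*p)^k := pow_nonneg h0 k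
    have hp1 : (1 - 2*p)^k ≤ 1 := pow_le_one₀ h0 h1
    constructor <;> simp <;> nlinarith
  exact concave_comp_convex_aux hg hf hmaps hanti
end
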